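/- arXiv:1912.05199 — 5 statements merged into one kernel-verified Lean document; each statement's English description precedes it below -/
import Mathlib

section
/- Let f : ℝ^m × ℝ^n → ℝ^m be continuous and strongly monotone with respect to its first argument x. Then there is a uniquely defined continuous function g : ℝ^n → ℝ^m such that f(g(y), y) = 0 for all y ∈ ℝ^n. -/
/-! Induction on the dimension. Split off a unit vector `e` with orthogonal complement `K`. For
each `v : ℝ` the projection onto `K` of `F (v • e + ·)` is again continuous and strongly monotone,
so it has a zero `U v`, and `U` is continuous because by `c ‖x - x'‖ ≤ ‖F x - F x'‖` zeros of a
strongly monotone family move no faster than the family itself. Along the curve `v • e + U v` the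
map `F` points in the direction `e`, and its `e`-component is a strongly monotone function of
`v : ℝ`, so the intermediate value theorem gives a zero of `F`. For a parametrised family the zeros
are unique by the same estimate, and depend continuously on the parameter. -/

open scoped InnerProductSpace

open Module Submodule Filter Topology

variable {E : Type*} [NormedAddCommGroup E] [InnerProductSpace ℝ E]

def StronglyMonotoneWith (c : ℝ) (F : E → E) : Prop :=
  ∀ x x', c * ‖x - x'‖ ^ 2 ≤ ⟪F x - F x', x - x'⟫_ℝ

namespace StronglyMonotoneWith

variable {c : ℝ} {F : E → E}

theorem mul_norm_sub_le (hF : StronglyMonotoneWith c F) (x x' : E) :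
    c * ‖x - x'‖ ≤ ‖F x - F x'‖ := by
  rcases (norm_nonneg (x - x')).eq_or_lt with h | h
  · rw [← h, mul_zero]
    exact norm_nonneg _
  · refine le_of_mul_le_mul_right ?_ h
    calc c * ‖x - x'‖ * ‖x - x'‖ = c * ‖x - x'‖ ^ 2 := by ring
      _ ≤ ⟪F x - F x', x - x'⟫_ℝ := hF x x'
      _ ≤ ‖F x - F x'‖ * ‖x - x'‖ := real_inner_le_norm _ _

theorem injective (hF : StronglyMonotoneWith c F) (hc : 0 < c) : Function.Injective F := by
  intro x x' h
  have := hF.mul_norm_sub_le x x'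
  rw [h, sub_self, norm_zero] at this
  exact sub_eq_zero.mp (norm_le_zero_iff.mp (nonpos_of_mul_nonpos_right this hc))

theorem continuous_of_forall_apply_eq_zero {Y : Type*} [TopologicalSpace Y] {F : Y → E → E}
    (hF : ∀ y, StronglyMonotoneWith c (F y)) (hc : 0 < c)
    (hcont : ∀ x, Continuous fun y => F y x) {g : Y → E} (hg : ∀ y, F y (g y) = 0) :
    Continuous g := by
  refine continuous_iff_continuousAt.mpr fun y₀ => ?_
  have hbound : ∀ y, ‖g y - g y₀‖ ≤ ‖F y (g y₀)‖ / c := fun y => by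
    rw [le_div_iff₀' hc]
    simpa [hg y] using (hF y).mul_norm_sub_le (g y) (g y₀)
  have hlim : Tendsto (fun y => ‖F y (g y₀)‖ / c) (𝓝 y₀) (𝓝 0) := by
    simpa [hg y₀] using ((hcont (g y₀)).norm.div_const c).tendsto y₀
  exact tendsto_iff_norm_sub_tendsto_zero.mpr
    (squeeze_zero (fun _ => norm_nonneg _) hbound hlim)

theorem exists_eq_zero_of_real {φ : ℝ → ℝ} (hφ : StronglyMonotoneWith c φ) (hc : 0 < c)
    (hcont : Continuous φ) : ∃ v, φ v = 0 := by
  have hgrowth : ∀ v v', v' ≤ v → c * (v - v') ≤ φ v - φ v' := by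
    intro v v' hvv'
    have h := hφ v v'
    rw [Real.norm_eq_abs, sq_abs, real_inner_comm, Real.inner_apply] at h
    rcases hvv'.eq_or_lt with rfl | hlt
    · simp
    · exact le_of_mul_le_mul_left (by linarith) (sub_pos.mpr hlt)
  set R := |φ 0| / c
  have hR : c * R = |φ 0| := mul_div_cancel₀ _ hc.ne'
  have hR0 : 0 ≤ R := div_nonneg (abs_nonneg _) hc.le
  have hneg : φ (-R) ≤ 0 := by
    have := hgrowth 0 (-R) (by linarith)
    linarith [le_abs_self (φ 0)]
  have hpos : 0 ≤ φ R := by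
    have := hgrowth R 0 hR0
    linarith [neg_abs_le (φ 0)]
  obtain ⟨v, -, hv⟩ := intermediate_value_Icc (by linarith) hcont.continuousOn ⟨hneg, hpos⟩
  exact ⟨v, hv⟩

theorem orthogonalProjectionOnto_comp_add (hF : StronglyMonotoneWith c F)
    (K : Submodule ℝ E) [K.HasOrthogonalProjection] (a : E) :
    StronglyMonotoneWith c fun u : K => K.orthogonalProjectionOnto (F (a + u)) := by
  intro u u'
  simpa [← map_sub] using hF (a + u) (a + u')

theorem inner_comp_smul_add {e : E} (he : ‖e‖ = 1) (hF : StronglyMonotoneWith c F) (hc : 0 ≤ c)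
    {U : ℝ → E} (hU : ∀ v, U v ∈ (ℝ ∙ e)ᗮ) (hFU : ∀ v, F (v • e + U v) ∈ (ℝ ∙ e)ᗮᗮ) :
    StronglyMonotoneWith c fun v : ℝ => ⟪F (v • e + U v), e⟫_ℝ := by
  intro v v'
  have hd : U v - U v' ∈ (ℝ ∙ e)ᗮ := sub_mem (hU v) (hU v')
  have hw : ⟪F (v • e + U v) - F (v' • e + U v'), U v - U v'⟫_ℝ = 0 :=
    inner_left_of_mem_orthogonal hd (sub_mem (hFU v) (hFU v'))
  have hdiff : v • e + U v - (v' • e + U v') = (v - v') • e + (U v - U v') := by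
    rw [sub_smul]; abel
  have hde : ⟪U v - U v', e⟫_ℝ = 0 := mem_orthogonal_singleton_iff_inner_left.mp hd
  have hcoord : ‖v - v'‖ ≤ ‖v • e + U v - (v' • e + U v')‖ := by
    rw [hdiff]
    have := abs_real_inner_le_norm ((v - v') • e + (U v - U v')) e
    rwa [inner_add_left, real_inner_smul_left, real_inner_self_eq_norm_sq, he, hde,
      one_pow, mul_one, add_zero, mul_one, ← Real.norm_eq_abs] at this
  calc c * ‖v - v'‖ ^ 2 ≤ c * ‖v • e + U v - (v' • e + U v')‖ ^ 2 := by gcongr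
    _ ≤ _ := hF _ _
    _ = _ := by
      rw [hdiff, inner_add_right, hw, real_inner_smul_right, inner_sub_left, Real.inner_apply]
      ring

theorem exists_eq_zero_of_orthogonal_singleton {e : E} (he : ‖e‖ = 1)
    (hK : ∀ G : (ℝ ∙ e)ᗮ → (ℝ ∙ e)ᗮ, StronglyMonotoneWith c G → Continuous G → ∃ u, G u = 0)
    (hF : StronglyMonotoneWith c F) (hc : 0 < c) (hcont : Continuous F) : ∃ x, F x = 0 := by
  set K := (ℝ ∙ e)ᗮ
  set G : ℝ → K → K := fun v u => K.orthogonalProjectionOnto (F (v • e + u))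
  have hG : ∀ v, StronglyMonotoneWith c (G v) := fun v =>
    hF.orthogonalProjectionOnto_comp_add K (v • e)
  choose U hU using fun v => hK (G v) (hG v) (by fun_prop)
  have hUcont : Continuous U := continuous_of_forall_apply_eq_zero hG hc (by fun_prop) hU
  have hFU : ∀ v, F (v • e + U v) ∈ Kᗮ := fun v => orthogonalProjectionOnto_eq_zero_iff.mp (hU v)
  have hφ := inner_comp_smul_add he hF hc.le (fun v => (U v).2) hFU
  obtain ⟨v, hv⟩ := hφ.exists_eq_zero_of_real hc (by fun_prop)
  have hFK : F (v • e + U v) ∈ K := mem_orthogonal_singleton_iff_inner_left.mpr hv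
  exact ⟨_, (mem_bot ℝ).mp ((inf_orthogonal_eq_bot K).le ⟨hFK, hFU v⟩)⟩

theorem exists_eq_zero [FiniteDimensional ℝ E] (hF : StronglyMonotoneWith c F) (hc : 0 < c)
    (hcont : Continuous F) : ∃ x, F x = 0 := by
  induction h : finrank ℝ E generalizing E with
  | zero =>
    have : Subsingleton E := finrank_zero_iff.mp h
    exact ⟨0, Subsingleton.elim _ _⟩
  | succ d ih =>
    have : Nontrivial E := finrank_pos_iff.mp (by rw [h]; exact d.succ_pos)
    obtain ⟨e, he⟩ := exists_norm_eq E zero_le_one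
    have : Fact (finrank ℝ E = d + 1) := ⟨h⟩
    refine exists_eq_zero_of_orthogonal_singleton he (fun G hG hGcont => ?_) hF hc hcont
    exact ih hG hGcont (finrank_orthogonal_span_singleton (norm_ne_zero_iff.mp (by simp [he])))

end StronglyMonotoneWith

/-- If `f : ℝ^m × ℝ^n → ℝ^m` is continuous and strongly monotone with respect to its
first argument, then there is a uniquely defined continuous function `g : ℝ^n → ℝ^m`
with `f (g y, y) = 0` for all `y`. -/
theorem strongly_monotone_implicit_function {m n : ℕ}
    (f : EuclideanSpace ℝ (Fin m) × EuclideanSpace ℝ (Fin n) → EuclideanSpace ℝ (Fin m))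
    (hf_cont : Continuous f)
    (hf_mono : ∃ c : ℝ, 0 < c ∧ ∀ y : EuclideanSpace ℝ (Fin n),
      ∀ x x' : EuclideanSpace ℝ (Fin m),
        ⟪f (x, y) - f (x', y), x - x'⟫_ℝ ≥ c * ‖x - x'‖ ^ 2) :
    ∃! g : EuclideanSpace ℝ (Fin n) → EuclideanSpace ℝ (Fin m),
      Continuous g ∧ ∀ y : EuclideanSpace ℝ (Fin n), f (g y, y) = 0 := by
  obtain ⟨c, hc, hmono⟩ := hf_mono
  have hF : ∀ y, StronglyMonotoneWith c fun x => f (x, y) := hmono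
  choose g hg using fun y => (hF y).exists_eq_zero hc (by fun_prop)
  refine ⟨g, ⟨StronglyMonotoneWith.continuous_of_forall_apply_eq_zero hF hc (by fun_prop) hg, hg⟩,
    ?_⟩
  rintro g' ⟨-, hg'⟩
  funext y
  exact (hF y).injective hc ((hg' y).trans (hg y).symm)
end

section
/- Let f : ℝ^m × ℝ^n → ℝ^m be strongly monotone with respect to its first argument with monotonicity constant c > 0, and let g : ℝ^n → ℝ^m satisfy f(g(y), y) = 0 for all y ∈ ℝ^n. Then for all y, ȳ ∈ ℝ^n one has ‖g(y) - g(ȳ)‖ ≤ (1/c)‖f(g(ȳ), y)‖. -/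
open scoped InnerProductSpace

theorem mul_norm_sub_le_norm_sub_of_strongly_monotone {E : Type*} [NormedAddCommGroup E]
    [InnerProductSpace ℝ E] {F : E → E} {c : ℝ}
    (hF : ∀ x x' : E, c * ‖x - x'‖ ^ 2 ≤ ⟪F x - F x', x - x'⟫_ℝ) (x x' : E) :
    c * ‖x - x'‖ ≤ ‖F x - F x'‖ := by
  rcases (norm_nonneg (x - x')).eq_or_lt with hzero | hpos
  · rw [← hzero, mul_zero]
    exact norm_nonneg _
  · refine le_of_mul_le_mul_right ?_ hpos
    calc c * ‖x - x'‖ * ‖x - x'‖ = c * ‖x - x'‖ ^ 2 := by ring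
      _ ≤ ⟪F x - F x', x - x'⟫_ℝ := hF x x'
      _ ≤ ‖F x - F x'‖ * ‖x - x'‖ := real_inner_le_norm _ _

/-- If `f : ℝ^m × ℝ^n → ℝ^m` is strongly monotone with respect to its first argument
with constant `c > 0`, and `g : ℝ^n → ℝ^m` satisfies `f (g y, y) = 0` for all `y`, then
`‖g y - g y'‖ ≤ (1/c) * ‖f (g y', y)‖` for all `y, y'`. -/
theorem implicit_function_continuity_estimate {m n : ℕ}
    (f : EuclideanSpace ℝ (Fin m) × EuclideanSpace ℝ (Fin n) → EuclideanSpace ℝ (Fin m))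
    (c : ℝ) (hc : 0 < c)
    (hf_mono : ∀ y : EuclideanSpace ℝ (Fin n), ∀ x x' : EuclideanSpace ℝ (Fin m),
      ⟪f (x, y) - f (x', y), x - x'⟫_ℝ ≥ c * ‖x - x'‖ ^ 2)
    (g : EuclideanSpace ℝ (Fin n) → EuclideanSpace ℝ (Fin m))
    (hg : ∀ y : EuclideanSpace ℝ (Fin n), f (g y, y) = 0) :
    ∀ y y' : EuclideanSpace ℝ (Fin n), ‖g y - g y'‖ ≤ (1 / c) * ‖f (g y', y)‖ := by
  intro y y'
  have h := mul_norm_sub_le_norm_sub_of_strongly_monotone (F := fun x ↦ f (x, y))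
    (hf_mono y) (g y) (g y')
  rw [hg y, zero_sub, norm_neg] at h
  rwa [one_div_mul_eq_div, le_div_iff₀' hc]
end

section
/- Let f : ℝ^m × ℝ^n → ℝ^m be strongly monotone with respect to its first argument with constant c > 0, let N be a nonzero real m×r matrix with trivial kernel (full column rank), and let s : ℝ^n → ℝ^r be any function. Then the function F : ℝ^r × ℝ^n → ℝ^r defined by F(u, y) := Nᵀ f(Nu, y) + s(y) is strongly monotone with respect to u; in particular it satisfies ⟨F(u,y) - F(ū,y), u - ū⟩ ≥ (c/c₁)‖u - ū‖² for all u, ū ∈ ℝ^r and y ∈ ℝ^n, where c₁ := ‖(NᵀN)⁻¹Nᵀ‖² > 0 (operator norm). -/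
open scoped InnerProductSpace Matrix.Norms.L2Operator

/-! With `M := (NᵀN)⁻¹Nᵀ` we have `M N = 1`, hence `‖v‖ ≤ ‖M‖ ‖N v‖`. As `Nᵀ` is the adjoint of
`N`, `⟪Nᵀ (f (N u) - f (N u')), u - u'⟫ = ⟪f (N u) - f (N u'), N (u - u')⟫ ≥ c ‖N (u - u')‖²`,
which is at least `c / ‖M‖² · ‖u - u'‖²`; the shift `s y` cancels in the difference. -/

def StronglyMonotone {F : Type*} [NormedAddCommGroup F] [InnerProductSpace ℝ F]
    (c : ℝ) (g : F → F) : Prop :=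
  ∀ x x', c * ‖x - x'‖ ^ 2 ≤ ⟪g x - g x', x - x'⟫_ℝ

namespace StronglyMonotone

variable {E F : Type*} [NormedAddCommGroup E] [InnerProductSpace ℝ E]
  [NormedAddCommGroup F] [InnerProductSpace ℝ F] {c : ℝ} {g : F → F}

theorem add_const (hg : StronglyMonotone c g) (b : F) : StronglyMonotone c (fun x => g x + b) :=
  fun x x' => by simpa only [add_sub_add_right_eq_sub] using hg x x'

theorem adjoint_comp_comp [FiniteDimensional ℝ E] [FiniteDimensional ℝ F]
    (hg : StronglyMonotone c g) (hc : 0 ≤ c) (A : E →ₗ[ℝ] F) {K : ℝ} (hK : 0 < K)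
    (hA : ∀ v, ‖v‖ ≤ K * ‖A v‖) :
    StronglyMonotone (c / K ^ 2) (fun u => LinearMap.adjoint A (g (A u))) := by
  intro u u'
  have hnorm : ‖u - u'‖ ^ 2 ≤ K ^ 2 * ‖A (u - u')‖ ^ 2 := by
    rw [← mul_pow]; exact pow_le_pow_left₀ (norm_nonneg _) (hA _) 2
  calc c / K ^ 2 * ‖u - u'‖ ^ 2 ≤ c / K ^ 2 * (K ^ 2 * ‖A (u - u')‖ ^ 2) := by gcongr
    _ = c * ‖A u - A u'‖ ^ 2 := by rw [map_sub]; field_simp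
    _ ≤ ⟪g (A u) - g (A u'), A u - A u'⟫_ℝ := hg _ _
    _ = ⟪LinearMap.adjoint A (g (A u)) - LinearMap.adjoint A (g (A u')), u - u'⟫_ℝ := by
      rw [← map_sub (LinearMap.adjoint A), LinearMap.adjoint_inner_left, map_sub]

end StronglyMonotone

namespace Matrix

variable {m r : Type*} [Fintype r] [DecidableEq r]

theorem mulVec_injective_of_toEuclideanLin {N : Matrix m r ℝ}
    (hN : Function.Injective N.toEuclideanLin) : Function.Injective N.mulVec := by
  intro x x' h
  simpa using @hN (WithLp.toLp 2 x) (WithLp.toLp 2 x') (by simp [h])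

theorem transpose_mul_self_inv_mul_transpose_mul_self [Fintype m] {N : Matrix m r ℝ}
    (hN : Function.Injective N.mulVec) : (Nᵀ * N)⁻¹ * Nᵀ * N = 1 := by
  have hpd : (Nᵀ * N).PosDef := by
    simpa only [conjTranspose_eq_transpose_of_trivial] using PosDef.conjTranspose_mul_self N hN
  rw [Matrix.mul_assoc, nonsing_inv_mul _ ((isUnit_iff_isUnit_det _).mp hpd.isUnit)]

variable {𝕜 : Type*} [RCLike 𝕜] [Fintype m] [DecidableEq m] {M : Matrix r m 𝕜}
  {N : Matrix m r 𝕜}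

theorem norm_le_l2_opNorm_mul_norm_of_mul_eq_one (h : M * N = 1) (v : EuclideanSpace 𝕜 r) :
    ‖v‖ ≤ ‖M‖ * ‖N.toEuclideanLin v‖ := by
  have hv : M.toEuclideanLin (N.toEuclideanLin v) = v := by
    change WithLp.toLp 2 (M *ᵥ (N *ᵥ v.ofLp)) = v
    rw [mulVec_mulVec, h, one_mulVec]
  calc ‖v‖ = ‖M.toEuclideanLin (N.toEuclideanLin v)‖ := by rw [hv]
    _ ≤ ‖M‖ * ‖N.toEuclideanLin v‖ := by
      rw [l2_opNorm_def]
      exact (toEuclideanLin.trans LinearMap.toContinuousLinearMap M).le_opNorm _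

theorem l2_opNorm_pos_of_mul_eq_one [Nonempty r] (h : M * N = 1) : 0 < ‖M‖ :=
  norm_pos_iff.mpr fun hM => one_ne_zero (h.symm.trans (by rw [hM, Matrix.zero_mul]))

end Matrix

/-- If `f : ℝ^m × ℝ^n → ℝ^m` is strongly monotone in its first argument with constant
`c > 0`, and `N ∈ ℝ^{m×r}` is nonzero with full column rank, then
`F (u, y) := Nᵀ f (N u, y) + s y` is strongly monotone in `u` with constant `c / c₁`,
where `c₁ = ‖(NᵀN)⁻¹Nᵀ‖² > 0` (`‖·‖` the `ℓ²` operator norm). -/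
theorem transformed_strongly_monotone {m n r : ℕ}
    (f : EuclideanSpace ℝ (Fin m) × EuclideanSpace ℝ (Fin n) → EuclideanSpace ℝ (Fin m))
    (c : ℝ) (hc : 0 < c)
    (hf_mono : ∀ y : EuclideanSpace ℝ (Fin n), ∀ x x' : EuclideanSpace ℝ (Fin m),
      ⟪f (x, y) - f (x', y), x - x'⟫_ℝ ≥ c * ‖x - x'‖ ^ 2)
    (N : Matrix (Fin m) (Fin r) ℝ) (hN : N ≠ 0)
    (hN_inj : ∀ x : EuclideanSpace ℝ (Fin r), N.toEuclideanLin x = 0 → x = 0)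
    (s : EuclideanSpace ℝ (Fin n) → EuclideanSpace ℝ (Fin r))
    (F : EuclideanSpace ℝ (Fin r) × EuclideanSpace ℝ (Fin n) → EuclideanSpace ℝ (Fin r))
    (hF : ∀ (u : EuclideanSpace ℝ (Fin r)) (y : EuclideanSpace ℝ (Fin n)),
      F (u, y) = N.transpose.toEuclideanLin (f (N.toEuclideanLin u, y)) + s y)
    (c₁ : ℝ) (hc₁ : c₁ = ‖(N.transpose * N)⁻¹ * N.transpose‖ ^ 2) :
    0 < c₁ ∧ ∀ (y : EuclideanSpace ℝ (Fin n)) (u u' : EuclideanSpace ℝ (Fin r)),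
      ⟪F (u, y) - F (u', y), u - u'⟫_ℝ ≥ (c / c₁) * ‖u - u'‖ ^ 2 := by
  have hMN : (N.transpose * N)⁻¹ * N.transpose * N = 1 :=
    Matrix.transpose_mul_self_inv_mul_transpose_mul_self <|
      Matrix.mulVec_injective_of_toEuclideanLin <| (injective_iff_map_eq_zero _).mpr hN_inj
  have : Nonempty (Fin r) := by
    by_contra h
    exact hN (Matrix.ext fun _ j => (h ⟨j⟩).elim)
  have hM := Matrix.l2_opNorm_pos_of_mul_eq_one hMN
  subst hc₁
  refine ⟨by positivity, fun y => ?_⟩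
  show StronglyMonotone (c / ‖(N.transpose * N)⁻¹ * N.transpose‖ ^ 2) fun u => F (u, y)
  have hFy : (fun u => F (u, y)) =
      fun u => LinearMap.adjoint N.toEuclideanLin (f (N.toEuclideanLin u, y)) + s y := by
    funext u
    rw [hF, ← Matrix.toEuclideanLin_conjTranspose_eq_adjoint,
      Matrix.conjTranspose_eq_transpose_of_trivial]
  have hfy : StronglyMonotone c fun x => f (x, y) := hf_mono y
  rw [hFy]
  exact (hfy.adjoint_comp_comp hc.le N.toEuclideanLin hM
    (Matrix.norm_le_l2_opNorm_mul_norm_of_mul_eq_one hMN)).add_const (s y)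
end

section
/- Let M be a real k×m matrix and P a real k×k projector (P² = P) whose kernel equals the kernel of M. Let r : ℝ^n → ℝ^m be continuous. Then there exists a continuous function g : ℝ^n → ℝ^k such that for all z ∈ ℝ^k and y ∈ ℝ^n: Mᵀ M z + Pᵀ r(y) = 0 if and only if Pz = g(y). -/
/-!
Write `A = MᵀM`. Since `ker A = ker M = ker P`, taking orthogonal complements gives
`range Pᵀ = (ker P)ᗮ = (ker A)ᗮ = range A`, so `Pᵀ = A T` for some linear `T`. Then
`A z + Pᵀ w = 0` says `A z = A (-T w)`, which, as `A` and `P` have the same kernel, is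
`P z = P (-T w)`. Hence `g = -P T r` works, and it is continuous because `r` is.
-/

open LinearMap

theorem LinearMap.map_eq_map_iff_of_ker_eq {R V W U : Type*} [Ring R] [AddCommGroup V]
    [AddCommGroup W] [AddCommGroup U] [Module R V] [Module R W] [Module R U]
    {f : V →ₗ[R] W} {g : V →ₗ[R] U} (h : ker f = ker g) {x y : V} :
    f x = f y ↔ g x = g y := by
  rw [← sub_eq_zero, ← map_sub, ← mem_ker, h, mem_ker, map_sub, sub_eq_zero]

theorem LinearMap.exists_comp_eq_of_range_le {R M N P : Type*} [Ring R] [AddCommGroup M]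
    [AddCommGroup N] [AddCommGroup P] [Module R M] [Module R N] [Module R P]
    [Module.Projective R P] (f : M →ₗ[R] N) (g : P →ₗ[R] N) (h : range g ≤ range f) :
    ∃ t : P →ₗ[R] M, f ∘ₗ t = g := by
  obtain ⟨t, ht⟩ := Module.projective_lifting_property f.rangeRestrict
    (g.codRestrict _ fun x => h (mem_range_self g x)) f.surjective_rangeRestrict
  refine ⟨t, ?_⟩
  ext x
  simpa using congrArg Subtype.val (LinearMap.congr_fun ht x)

section InnerProductSpace

variable {𝕜 E F G : Type*} [RCLike 𝕜]
  [NormedAddCommGroup E] [InnerProductSpace 𝕜 E] [FiniteDimensional 𝕜 E]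
  [NormedAddCommGroup F] [InnerProductSpace 𝕜 F] [FiniteDimensional 𝕜 F]
  [NormedAddCommGroup G] [InnerProductSpace 𝕜 G] [FiniteDimensional 𝕜 G]

theorem LinearMap.range_adjoint_eq_range_adjoint_comp_self_of_ker_eq
    {M : E →ₗ[𝕜] F} {P : E →ₗ[𝕜] G} (hker : ker P = ker M) :
    range P.adjoint = range (M.adjoint ∘ₗ M) := by
  rw [← orthogonal_ker, hker, orthogonal_ker, range_adjoint_comp_self]

theorem LinearMap.exists_adjoint_comp_self_add_adjoint_eq_zero_iff
    {M : E →ₗ[𝕜] F} {P : E →ₗ[𝕜] G} (hker : ker P = ker M) :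
    ∃ L : G →ₗ[𝕜] G, ∀ z w, (M.adjoint ∘ₗ M) z + P.adjoint w = 0 ↔ P z = L w := by
  obtain ⟨T, hT⟩ := exists_comp_eq_of_range_le (M.adjoint ∘ₗ M) P.adjoint
    (range_adjoint_eq_range_adjoint_comp_self_of_ker_eq hker).le
  have hA : ker (M.adjoint ∘ₗ M) = ker P := by rw [ker_adjoint_comp_self, hker]
  refine ⟨-(P ∘ₗ T), fun z w => ?_⟩
  rw [← hT, add_eq_zero_iff_eq_neg]
  simpa using map_eq_map_iff_of_ker_eq hA (x := z) (y := -T w)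

end InnerProductSpace

theorem Matrix.toEuclideanLin_transpose {m n : Type*} [Fintype m] [Fintype n]
    [DecidableEq m] [DecidableEq n] (A : Matrix m n ℝ) :
    A.transpose.toEuclideanLin = A.toEuclideanLin.adjoint := by
  rw [← Matrix.conjTranspose_eq_transpose_of_trivial,
    Matrix.toEuclideanLin_conjTranspose_eq_adjoint]

theorem projector_linear_solution_form_general {m n k : ℕ}
    (M : Matrix (Fin m) (Fin k) ℝ) (P : Matrix (Fin k) (Fin k) ℝ)
    (hP_ker : ∀ x : EuclideanSpace ℝ (Fin k),
      P.toEuclideanLin x = 0 ↔ M.toEuclideanLin x = 0)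
    (r : EuclideanSpace ℝ (Fin n) → EuclideanSpace ℝ (Fin k)) (hr_cont : Continuous r) :
    ∃ g : EuclideanSpace ℝ (Fin n) → EuclideanSpace ℝ (Fin k), Continuous g ∧
      ∀ (z : EuclideanSpace ℝ (Fin k)) (y : EuclideanSpace ℝ (Fin n)),
        (M.transpose * M).toEuclideanLin z + P.transpose.toEuclideanLin (r y) = 0 ↔
          P.toEuclideanLin z = g y := by
  have hker : ker P.toEuclideanLin = ker M.toEuclideanLin := by
    ext x
    exact hP_ker x
  obtain ⟨L, hL⟩ := exists_adjoint_comp_self_add_adjoint_eq_zero_iff hker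
  refine ⟨L ∘ r, L.continuous_of_finiteDimensional.comp hr_cont, fun z y => ?_⟩
  rw [Matrix.toLpLin_mul_same, Matrix.toEuclideanLin_transpose, Matrix.toEuclideanLin_transpose]
  exact hL z (r y)

/-- Let `M` be a real matrix with `k` columns and `P ∈ ℝ^{k×k}` a projector along
`ker M`, and let `r : ℝ^n → ℝ^k` be continuous. Then there is a continuous
`g : ℝ^n → ℝ^k` such that `MᵀM z + Pᵀ r y = 0` if and only if `P z = g y`. -/
theorem projector_linear_solution_form {m n k : ℕ}
    (M : Matrix (Fin m) (Fin k) ℝ) (P : Matrix (Fin k) (Fin k) ℝ)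
    (hP_proj : P * P = P)
    (hP_ker : ∀ x : EuclideanSpace ℝ (Fin k),
      P.toEuclideanLin x = 0 ↔ M.toEuclideanLin x = 0)
    (r : EuclideanSpace ℝ (Fin n) → EuclideanSpace ℝ (Fin k)) (hr_cont : Continuous r) :
    ∃ g : EuclideanSpace ℝ (Fin n) → EuclideanSpace ℝ (Fin k), Continuous g ∧
      ∀ (z : EuclideanSpace ℝ (Fin k)) (y : EuclideanSpace ℝ (Fin n)),
        (M.transpose * M).toEuclideanLin z + P.transpose.toEuclideanLin (r y) = 0 ↔
          P.toEuclideanLin z = g y :=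
  projector_linear_solution_form_general M P hP_ker r hr_cont
end

section
/- Let L be a real symmetric positive definite n×n matrix, let Q ∈ ℝ^{n×k} and Y ∈ ℝ^{n×p} both have full column rank, and suppose that the ranges of Q and Y intersect trivially, i.e., Q x₁ = Y x₂ with x₁ ∈ ℝ^k, x₂ ∈ ℝ^p implies x₁ = 0 and x₂ = 0. Then the p×p matrix C := Yᵀ (L − L Q (Qᵀ L Q)⁻¹ Qᵀ L) Y is symmetric positive definite. -/
/-!
With `P = Q (Qᵀ L Q)⁻¹ Qᵀ L`, the `L`-orthogonal projection onto the range of `Q`, one has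
`L - L Q (Qᵀ L Q)⁻¹ Qᵀ L = (1 - P)ᵀ L (1 - P)`. Hence `C = Bᵀ L B` with `B = (1 - P) Y`, and
`B x = Y x - Q (…)` vanishes only for `x = 0` because the ranges of `Q` and `Y` meet trivially.
-/

open Matrix

namespace Matrix

variable {R m n p : Type*} [CommRing R] [Fintype m] [Fintype n]

theorem mulVec_injective_one_sub_mul_mul [DecidableEq n] [Fintype p] {Q : Matrix n m R}
    {Y : Matrix n p R} (hQY : ∀ x₁ x₂, Q *ᵥ x₁ = Y *ᵥ x₂ → x₂ = 0) (A : Matrix m n R) :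
    Function.Injective ((1 - Q * A) * Y).mulVec := by
  refine (injective_iff_map_eq_zero ((1 - Q * A) * Y).mulVecLin).2 fun x hx =>
    hQY (A *ᵥ Y *ᵥ x) x ?_
  rw [mulVecLin_apply, ← mulVec_mulVec, sub_mulVec, one_mulVec, sub_eq_zero,
    ← mulVec_mulVec] at hx
  exact hx.symm

variable [DecidableEq m]

noncomputable def lOrthogonalProj (L : Matrix n n R) (Q : Matrix n m R) : Matrix n n R :=
  Q * (Qᵀ * L * Q)⁻¹ * Qᵀ * L

theorem transpose_lOrthogonalProj_mul {L : Matrix n n R} (hL : Lᵀ = L) (Q : Matrix n m R) :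
    (lOrthogonalProj L Q)ᵀ * L = L * lOrthogonalProj L Q := by
  simp only [lOrthogonalProj, transpose_mul, transpose_transpose, hL, transpose_nonsing_inv,
    Matrix.mul_assoc]

theorem lOrthogonalProj_mul_self {L : Matrix n n R} {Q : Matrix n m R}
    (hM : IsUnit (Qᵀ * L * Q).det) :
    lOrthogonalProj L Q * lOrthogonalProj L Q = lOrthogonalProj L Q := by
  calc lOrthogonalProj L Q * lOrthogonalProj L Q
      = Q * (Qᵀ * L * Q)⁻¹ * ((Qᵀ * L * Q) * (Qᵀ * L * Q)⁻¹) * Qᵀ * L := by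
        simp only [lOrthogonalProj, Matrix.mul_assoc]
    _ = lOrthogonalProj L Q := by rw [mul_nonsing_inv _ hM, Matrix.mul_one]; rfl

theorem sub_mul_lOrthogonalProj_eq [DecidableEq n] {L : Matrix n n R} (hL : Lᵀ = L)
    {Q : Matrix n m R} (hM : IsUnit (Qᵀ * L * Q).det) :
    L - L * lOrthogonalProj L Q = (1 - lOrthogonalProj L Q)ᵀ * L * (1 - lOrthogonalProj L Q) := by
  have hPL := transpose_lOrthogonalProj_mul hL Q
  have hPP := lOrthogonalProj_mul_self hM
  set P := lOrthogonalProj L Q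
  have hexpand : (1 - Pᵀ) * L * (1 - P) = L - Pᵀ * L - L * P + Pᵀ * L * P := by noncomm_ring
  rw [transpose_sub, transpose_one, hexpand, hPL, Matrix.mul_assoc, hPP]
  abel

end Matrix

theorem schur_like_posDef_general {n k p : ℕ}
    (L : Matrix (Fin n) (Fin n) ℝ) (hL_symm : L.transpose = L)
    (hL_pos : ∀ x : Fin n → ℝ, x ≠ 0 → 0 < x ⬝ᵥ L.mulVec x)
    (Q : Matrix (Fin n) (Fin k) ℝ)
    (hQ : ∀ x : Fin k → ℝ, Q.mulVec x = 0 → x = 0)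
    (Y : Matrix (Fin n) (Fin p) ℝ)
    (h_ranges : ∀ (x₁ : Fin k → ℝ) (x₂ : Fin p → ℝ),
      Q.mulVec x₁ = Y.mulVec x₂ → x₁ = 0 ∧ x₂ = 0)
    (C : Matrix (Fin p) (Fin p) ℝ)
    (hC : C = Y.transpose * (L - L * Q * (Q.transpose * L * Q)⁻¹ * Q.transpose * L) * Y) :
    C.transpose = C ∧ ∀ x : Fin p → ℝ, x ≠ 0 → 0 < x ⬝ᵥ C.mulVec x := by
  have hL : L.PosDef := .of_dotProduct_mulVec_pos (by simpa [IsHermitian] using hL_symm)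
    (by simpa using hL_pos)
  have hM : (Qᵀ * L * Q).PosDef := by
    simpa using hL.conjTranspose_mul_mul_same ((injective_iff_map_eq_zero Q.mulVecLin).2 hQ)
  set B := (1 - lOrthogonalProj L Q) * Y
  have hCB : C = Bᵀ * L * B := by
    have hP : L * lOrthogonalProj L Q = L * Q * (Qᵀ * L * Q)⁻¹ * Qᵀ * L := by
      simp only [lOrthogonalProj, Matrix.mul_assoc]
    rw [hC, ← hP, sub_mul_lOrthogonalProj_eq hL_symm hM.det_pos.ne'.isUnit]
    simp only [B, transpose_mul, Matrix.mul_assoc]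
  have hB : Function.Injective B.mulVec := by
    simpa only [B, lOrthogonalProj, Matrix.mul_assoc] using
      mulVec_injective_one_sub_mul_mul (fun x₁ x₂ h => (h_ranges x₁ x₂ h).2)
        ((Qᵀ * L * Q)⁻¹ * Qᵀ * L)
  have hCpos : C.PosDef := by
    simpa [hCB] using hL.conjTranspose_mul_mul_same hB
  refine ⟨by simpa [IsHermitian] using hCpos.isHermitian, fun x hx => ?_⟩
  simpa using hCpos.dotProduct_mulVec_pos hx

/-- Let `L` be real symmetric positive definite, `Q ∈ ℝ^{n×k}` and `Y ∈ ℝ^{n×p}` with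
full column rank and trivially intersecting ranges. Then
`C := Yᵀ (L − L Q (Qᵀ L Q)⁻¹ Qᵀ L) Y` is symmetric positive definite. -/
theorem schur_like_posDef {n k p : ℕ}
    (L : Matrix (Fin n) (Fin n) ℝ) (hL_symm : L.transpose = L)
    (hL_pos : ∀ x : Fin n → ℝ, x ≠ 0 → 0 < x ⬝ᵥ L.mulVec x)
    (Q : Matrix (Fin n) (Fin k) ℝ)
    (hQ : ∀ x : Fin k → ℝ, Q.mulVec x = 0 → x = 0)
    (Y : Matrix (Fin n) (Fin p) ℝ)
    (hY : ∀ x : Fin p → ℝ, Y.mulVec x = 0 → x = 0)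
    (h_ranges : ∀ (x₁ : Fin k → ℝ) (x₂ : Fin p → ℝ),
      Q.mulVec x₁ = Y.mulVec x₂ → x₁ = 0 ∧ x₂ = 0)
    (C : Matrix (Fin p) (Fin p) ℝ)
    (hC : C = Y.transpose * (L - L * Q * (Q.transpose * L * Q)⁻¹ * Q.transpose * L) * Y) :
    C.transpose = C ∧ ∀ x : Fin p → ℝ, x ≠ 0 → 0 < x ⬝ᵥ C.mulVec x :=
  schur_like_posDef_general L hL_symm hL_pos Q hQ Y h_ranges C hC
end
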